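/- Let u: ℝ³ → ℝ³ be C¹ with |u(x)|=1 everywhere. Then the vector field D(u) = (u·(∂₂u×∂₃u), u·(∂₃u×∂₁u), u·(∂₁u×∂₂u)) satisfies pointwise |D(u)| ≤ ½ |Du|², where |Du|² = |∂₁u|²+|∂₂u|²+|∂₃u|² is the squared Frobenius norm of the Jacobian. -/

import Mathlib

open Matrix


lemma abstract_ineq (A B C X Y Z D1 D2 D3 : ℝ) (hA0 : 0 ≤ A) (hB0 : 0 ≤ B) (hC0 : 0 ≤ C)
    (hAB : A*B = Z^2 + D3^2) (hAC : A*C = Y^2 + D2^2) (hBC : B*C = X^2 + D1^2)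
    (hD : A*D1 + Z*D2 + Y*D3 = 0) :
    D1^2 + D2^2 + D3^2 ≤ (1/2*(A+B+C))^2 := by
  rcases eq_or_lt_of_le hA0 with h | h
  · have h1 : Z^2 + D3^2 = 0 := by rw [← hAB, ← h]; ring
    have h2 : Y^2 + D2^2 = 0 := by rw [← hAC, ← h]; ring
    have hD3 : D3 = 0 := by nlinarith [sq_nonneg Z, sq_nonneg D3]
    have hD2 : D2 = 0 := by nlinarith [sq_nonneg Y, sq_nonneg D2]
    nlinarith [sq_nonneg (B - C), sq_nonneg X, hBC]
  · have keyid : A^2*((1/2*(A+B+C))^2 - (D1^2+D2^2+D3^2))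
        = (1/2*(A^2+Y^2+Z^2-D2^2-D3^2))^2 + (Z*D3 - Y*D2)^2 := by
      linear_combination (1/4*(2*A^2 + Y^2+Z^2+D2^2+D3^2 + A*B + A*C)) * hAB
        + (1/4*(2*A^2 + Y^2+Z^2+D2^2+D3^2 + A*B + A*C)) * hAC
        + (Z*D2 + Y*D3 - A*D1) * hD
    nlinarith [keyid, sq_nonneg (1/2*(A^2+Y^2+Z^2-D2^2-D3^2)), sq_nonneg (Z*D3 - Y*D2),
      mul_pos h h]

lemma key_scalar (u0 u1 u2 a0 a1 a2 b0 b1 b2 c0 c1 c2 : ℝ)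
    (huu : u0^2 + u1^2 + u2^2 = 1)
    (ha : u0*a0 + u1*a1 + u2*a2 = 0)
    (hb : u0*b0 + u1*b1 + u2*b2 = 0)
    (hc : u0*c0 + u1*c1 + u2*c2 = 0) :
    (u0*(b1*c2 - b2*c1) + u1*(b2*c0 - b0*c2) + u2*(b0*c1 - b1*c0))^2
      + (u0*(c1*a2 - c2*a1) + u1*(c2*a0 - c0*a2) + u2*(c0*a1 - c1*a0))^2
      + (u0*(a1*b2 - a2*b1) + u1*(a2*b0 - a0*b2) + u2*(a0*b1 - a1*b0))^2
      ≤ (1/2 * ((a0^2+a1^2+a2^2) + (b0^2+b1^2+b2^2) + (c0^2+c1^2+c2^2)))^2 := by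
  refine abstract_ineq (a0^2+a1^2+a2^2) (b0^2+b1^2+b2^2) (c0^2+c1^2+c2^2)
    (b0*c0+b1*c1+b2*c2) (a0*c0+a1*c1+a2*c2) (a0*b0+a1*b1+a2*b2) _ _ _
    (by positivity) (by positivity) (by positivity) ?_ ?_ ?_ ?_
  · linear_combination (-((a0^2+a1^2+a2^2)*(b0^2+b1^2+b2^2) - (a0*b0+a1*b1+a2*b2)^2)) * huu
      + ((b0^2+b1^2+b2^2)*(u0*a0+u1*a1+u2*a2) - 2*(a0*b0+a1*b1+a2*b2)*(u0*b0+u1*b1+u2*b2)) * ha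
      + ((a0^2+a1^2+a2^2)*(u0*b0+u1*b1+u2*b2)) * hb
  · linear_combination (-((a0^2+a1^2+a2^2)*(c0^2+c1^2+c2^2) - (a0*c0+a1*c1+a2*c2)^2)) * huu
      + ((c0^2+c1^2+c2^2)*(u0*a0+u1*a1+u2*a2) - 2*(a0*c0+a1*c1+a2*c2)*(u0*c0+u1*c1+u2*c2)) * ha
      + ((a0^2+a1^2+a2^2)*(u0*c0+u1*c1+u2*c2)) * hc
  · linear_combination (-((b0^2+b1^2+b2^2)*(c0^2+c1^2+c2^2) - (b0*c0+b1*c1+b2*c2)^2)) * huu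
      + ((c0^2+c1^2+c2^2)*(u0*b0+u1*b1+u2*b2) - 2*(b0*c0+b1*c1+b2*c2)*(u0*c0+u1*c1+u2*c2)) * hb
      + ((b0^2+b1^2+b2^2)*(u0*c0+u1*c1+u2*c2)) * hc
  · linear_combination (a0*(b1*c2 - b2*c1) + a1*(b2*c0 - b0*c2) + a2*(b0*c1 - b1*c0)) * ha

lemma key_vec (u a b c : Fin 3 → ℝ) (huu : u ⬝ᵥ u = 1)
    (ha : u ⬝ᵥ a = 0) (hb : u ⬝ᵥ b = 0) (hc : u ⬝ᵥ c = 0) :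
    (u ⬝ᵥ (crossProduct b c))^2 + (u ⬝ᵥ (crossProduct c a))^2 + (u ⬝ᵥ (crossProduct a b))^2
      ≤ (1/2 * (a ⬝ᵥ a + b ⬝ᵥ b + c ⬝ᵥ c))^2 := by
  simp only [cross_apply, vec3_dotProduct, Matrix.cons_val_zero, Matrix.cons_val_one,
    Matrix.head_cons, Matrix.cons_val_two, Matrix.tail_cons] at *
  have := key_scalar (u 0) (u 1) (u 2) (a 0) (a 1) (a 2) (b 0) (b 1) (b 2) (c 0) (c 1) (c 2)
    (by linarith) (by linarith) (by linarith) (by linarith)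
  refine le_trans (le_of_eq ?_) (le_trans this (le_of_eq ?_)) <;> ring

lemma tangent (u : (Fin 3 → ℝ) → (Fin 3 → ℝ)) (hu : ContDiff ℝ 1 u)
    (hsph : ∀ x, u x ⬝ᵥ u x = 1) (x v : Fin 3 → ℝ) :
    u x ⬝ᵥ (fderiv ℝ u x v) = 0 := by
  have hd : DifferentiableAt ℝ u x := hu.differentiable one_ne_zero x
  have hU := hd.hasFDerivAt
  set U := fderiv ℝ u x with hUdef
  have hcoord : ∀ i : Fin 3, HasFDerivAt (fun y => u y i)
      ((ContinuousLinearMap.proj i).comp U) x := fun i =>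
    (ContinuousLinearMap.proj i : ((Fin 3) → ℝ) →L[ℝ] ℝ).hasFDerivAt.comp x hU
  have hsum : HasFDerivAt (fun y => ∑ i : Fin 3, u y i * u y i)
      (∑ i : Fin 3, (u x i • ((ContinuousLinearMap.proj i).comp U)
        + u x i • ((ContinuousLinearMap.proj i).comp U))) x :=
    HasFDerivAt.fun_sum fun i _ => (hcoord i).mul (hcoord i)
  have hconst : HasFDerivAt (fun y => ∑ i : Fin 3, u y i * u y i)
      (0 : (Fin 3 → ℝ) →L[ℝ] ℝ) x := by
    have he : (fun y => ∑ i : Fin 3, u y i * u y i) = fun _ => (1:ℝ) := by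
      funext y
      have := hsph y
      simpa [dotProduct] using this
    rw [he]
    exact hasFDerivAt_const 1 x
  have huniq := hsum.unique hconst
  have hzero : (∑ i : Fin 3, (u x i • ((ContinuousLinearMap.proj i).comp U)
        + u x i • ((ContinuousLinearMap.proj i).comp U))) v = 0 := by
    rw [huniq]; rfl
  simp only [ContinuousLinearMap.sum_apply, ContinuousLinearMap.add_apply,
    ContinuousLinearMap.smul_apply, ContinuousLinearMap.comp_apply,
    ContinuousLinearMap.proj_apply, smul_eq_mul, Fin.sum_univ_three] at hzero
  simp only [vec3_dotProduct]
  linarith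

lemma dot_self_nonneg3 (v : Fin 3 → ℝ) : (0:ℝ) ≤ v ⬝ᵥ v := by
  rw [vec3_dotProduct]
  nlinarith [mul_self_nonneg (v 0), mul_self_nonneg (v 1), mul_self_nonneg (v 2)]

/-- The `j`-th partial derivative of a map `ℝ³ → ℝ³`. -/
noncomputable def pderiv3 (f : (Fin 3 → ℝ) → (Fin 3 → ℝ)) (j : Fin 3)
    (x : Fin 3 → ℝ) : Fin 3 → ℝ :=
  fderiv ℝ f x (Pi.single j 1)

/-- For a `C¹` map `u : ℝ³ → ℝ³` with `|u| = 1` everywhere, the vector field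
`D(u) = (u·(∂₂u×∂₃u), u·(∂₃u×∂₁u), u·(∂₁u×∂₂u))` satisfies the pointwise bound
`|D(u)| ≤ ½ |Du|²`, where `|Du|²` is the squared Frobenius norm of the Jacobian. -/
theorem norm_D_le_half_energy (u : (Fin 3 → ℝ) → (Fin 3 → ℝ))
    (hu : ContDiff ℝ 1 u) (hsph : ∀ x, u x ⬝ᵥ u x = 1) (x : Fin 3 → ℝ) :
    Real.sqrt ((u x ⬝ᵥ (crossProduct (pderiv3 u 1 x) (pderiv3 u 2 x))) ^ 2
        + (u x ⬝ᵥ (crossProduct (pderiv3 u 2 x) (pderiv3 u 0 x))) ^ 2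
        + (u x ⬝ᵥ (crossProduct (pderiv3 u 0 x) (pderiv3 u 1 x))) ^ 2)
      ≤ (1 / 2) * (pderiv3 u 0 x ⬝ᵥ pderiv3 u 0 x
        + pderiv3 u 1 x ⬝ᵥ pderiv3 u 1 x
        + pderiv3 u 2 x ⬝ᵥ pderiv3 u 2 x) := by
  have h0 : u x ⬝ᵥ pderiv3 u 0 x = 0 := tangent u hu hsph x _
  have h1 : u x ⬝ᵥ pderiv3 u 1 x = 0 := tangent u hu hsph x _
  have h2 : u x ⬝ᵥ pderiv3 u 2 x = 0 := tangent u hu hsph x _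
  have hk := key_vec (u x) (pderiv3 u 0 x) (pderiv3 u 1 x) (pderiv3 u 2 x)
    (hsph x) h0 h1 h2
  have hR : (0:ℝ) ≤ 1/2 * (pderiv3 u 0 x ⬝ᵥ pderiv3 u 0 x
      + pderiv3 u 1 x ⬝ᵥ pderiv3 u 1 x + pderiv3 u 2 x ⬝ᵥ pderiv3 u 2 x) := by
    have n0 := dot_self_nonneg3 (pderiv3 u 0 x)
    have n1 := dot_self_nonneg3 (pderiv3 u 1 x)
    have n2 := dot_self_nonneg3 (pderiv3 u 2 x)
    linarith
  calc Real.sqrt ((u x ⬝ᵥ (crossProduct (pderiv3 u 1 x) (pderiv3 u 2 x))) ^ 2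
        + (u x ⬝ᵥ (crossProduct (pderiv3 u 2 x) (pderiv3 u 0 x))) ^ 2
        + (u x ⬝ᵥ (crossProduct (pderiv3 u 0 x) (pderiv3 u 1 x))) ^ 2)
      ≤ Real.sqrt ((1/2 * (pderiv3 u 0 x ⬝ᵥ pderiv3 u 0 x
          + pderiv3 u 1 x ⬝ᵥ pderiv3 u 1 x + pderiv3 u 2 x ⬝ᵥ pderiv3 u 2 x))^2) :=
        Real.sqrt_le_sqrt hk
    _ = 1/2 * (pderiv3 u 0 x ⬝ᵥ pderiv3 u 0 x
          + pderiv3 u 1 x ⬝ᵥ pderiv3 u 1 x + pderiv3 u 2 x ⬝ᵥ pderiv3 u 2 x) :=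
        Real.sqrt_sq hR
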